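/- arXiv:1508.06012 — 9 statements merged into one kernel-verified Lean document; each statement's English description precedes it below -/
import Mathlib

section
/- For the map F(x) = (x_1³ − 2x_1²x_2 + x_1x_2², x_2³) and q = (0, −1), both x = (0,1) and x = (1,1) solve the complementarity problem: x ≥ 0, F(x)+q ≥ 0, and x_i(F_i(x)+q_i) = 0 for i = 1,2. Hence this tensor complementarity problem has at least two distinct solutions. -/
/-- For `F(x) = (x_1³ - 2x_1²x_2 + x_1x_2², x_2³)` and
`q = (0,-1)`, both `(0,1)` and `(1,1)` solve the complementarity problem,
so the TCP has at least two distinct solutions. -/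
theorem stmt_3 :
    let F : (Fin 2 → ℝ) → (Fin 2 → ℝ) :=
      fun x => ![x 0 ^ 3 - 2 * x 0 ^ 2 * x 1 + x 0 * x 1 ^ 2, x 1 ^ 3]
    let q : Fin 2 → ℝ := ![0, -1]
    let Sol : (Fin 2 → ℝ) → Prop := fun x =>
      (∀ i, 0 ≤ x i) ∧ (∀ i, 0 ≤ F x i + q i) ∧ ∑ i, x i * (F x i + q i) = 0
    Sol ![0, 1] ∧ Sol ![1, 1] ∧ (![0, 1] : Fin 2 → ℝ) ≠ ![1, 1] := by
  intro F q Sol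
  refine ⟨?_, ?_, fun h => by simpa using congrFun h 0⟩ <;>
    norm_num [Sol, F, q, Fin.forall_fin_two, Fin.sum_univ_two]
end

section
/- There exists a P tensor A (of order 4, dimension 2) and a vector q ∈ ℝ² such that TCP(q,A) has more than one solution. Consequently, 'A is a P tensor' does not imply that TCP(q,A) has the global uniqueness and solvability property. -/
/-!
The tensor with `A x³ = (x₀³, x₁³ - x₀ x₁²)` is a P tensor: if `x₀ ≠ 0` then
`x₀ (A x³)₀ = x₀⁴ > 0`, and otherwise `x₁ (A x³)₁ = x₁⁴ > 0`. For `q = (-1, 0)` the map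
`x ↦ A x³ + q` vanishes at both `(1, 0)` and `(1, 1)`, and a nonnegative zero of this map
solves TCP(q, A) trivially.
-/

/-- `(A x^{m-1})_i = ∑_{i_2,…,i_m} a_{i i_2 ⋯ i_m} x_{i_2} ⋯ x_{i_m}`,
for a real tensor of order `k+1` and dimension `n`, encoded as
`A : Fin n → (Fin k → Fin n) → ℝ`. -/
noncomputable def tApply {n k : ℕ} (A : Fin n → (Fin k → Fin n) → ℝ)
    (x : Fin n → ℝ) (i : Fin n) : ℝ :=
  ∑ f : Fin k → Fin n, A i f * ∏ j, x (f j)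

section TCP

variable {n k : ℕ}

def IsPTensor (A : Fin n → (Fin k → Fin n) → ℝ) : Prop :=
  ∀ x : Fin n → ℝ, x ≠ 0 → ∃ i, x i * tApply A x i > 0

def IsTCPSolution (A : Fin n → (Fin k → Fin n) → ℝ) (q x : Fin n → ℝ) : Prop :=
  (∀ i, 0 ≤ x i) ∧ (∀ i, 0 ≤ tApply A x i + q i) ∧ ∑ i, x i * (tApply A x i + q i) = 0

theorem isTCPSolution_of_tApply_add_eq_zero {A : Fin n → (Fin k → Fin n) → ℝ}
    {q x : Fin n → ℝ} (hx : ∀ i, 0 ≤ x i) (hzero : ∀ i, tApply A x i + q i = 0) :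
    IsTCPSolution A q x :=
  ⟨hx, fun i => (hzero i).ge, by simp [hzero]⟩

end TCP

noncomputable def exampleTensor : Fin 2 → (Fin 3 → Fin 2) → ℝ := fun i f =>
  if i = 0 then (if f = ![0, 0, 0] then 1 else 0)
  else (if f = ![1, 1, 1] then 1 else 0) - (if f = ![0, 1, 1] then 1 else 0)

theorem tApply_exampleTensor_zero (x : Fin 2 → ℝ) : tApply exampleTensor x 0 = x 0 ^ 3 := by
  simp [tApply, exampleTensor, Fin.prod_univ_three, pow_three, mul_assoc]

theorem tApply_exampleTensor_one (x : Fin 2 → ℝ) :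
    tApply exampleTensor x 1 = x 1 ^ 3 - x 0 * x 1 ^ 2 := by
  simp [tApply, exampleTensor, sub_mul, Finset.sum_sub_distrib, Fin.prod_univ_three, pow_three, sq,
    mul_assoc]

theorem isPTensor_exampleTensor : IsPTensor exampleTensor := by
  intro x hx
  by_cases hx₀ : x 0 = 0
  · have hx₁ : x 1 ≠ 0 := fun hx₁ => hx (funext fun i => by fin_cases i <;> assumption)
    refine ⟨1, ?_⟩
    rw [tApply_exampleTensor_one, hx₀]
    have : 0 < x 1 ^ 4 := by positivity
    linear_combination this
  · refine ⟨0, ?_⟩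
    rw [tApply_exampleTensor_zero]
    have : 0 < x 0 ^ 4 := by positivity
    linear_combination this

theorem isTCPSolution_exampleTensor {x : Fin 2 → ℝ} (hx₀ : x 0 = 1) (hx₁ : x 1 = 0 ∨ x 1 = 1) :
    IsTCPSolution exampleTensor ![-1, 0] x := by
  refine isTCPSolution_of_tApply_add_eq_zero (fun i => ?_) (fun i => ?_)
  · fin_cases i <;> rcases hx₁ with h | h <;> simp [hx₀, h]
  · fin_cases i <;> rcases hx₁ with h | h <;>
      simp [tApply_exampleTensor_zero, tApply_exampleTensor_one, hx₀, h]

/-- There exists a P tensor of order 4 and dimension 2 and a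
vector q such that TCP(q,A) has more than one solution. -/
theorem stmt_4 :
    ∃ (A : Fin 2 → (Fin 3 → Fin 2) → ℝ) (q : Fin 2 → ℝ),
      (∀ x : Fin 2 → ℝ, x ≠ 0 → ∃ i, x i * tApply A x i > 0) ∧
      (∃ x y : Fin 2 → ℝ, x ≠ y ∧
        ((∀ i, 0 ≤ x i) ∧ (∀ i, 0 ≤ tApply A x i + q i) ∧
          ∑ i, x i * (tApply A x i + q i) = 0) ∧
        ((∀ i, 0 ≤ y i) ∧ (∀ i, 0 ≤ tApply A y i + q i) ∧
          ∑ i, y i * (tApply A y i + q i) = 0)) :=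
  ⟨exampleTensor, ![-1, 0], isPTensor_exampleTensor, ![1, 0], ![1, 1],
    fun h => by simpa using congrFun h 1,
    isTCPSolution_exampleTensor rfl (Or.inl rfl), isTCPSolution_exampleTensor rfl (Or.inr rfl)⟩
end

section
/- There exists a tensor A (of odd order 3, dimension 2) such that TCP(q,A) has a unique solution for every q ∈ ℝ², yet A is not a P tensor. -/
/-- The diagonal tensor witness. -/
noncomputable def diagA : Fin 2 → (Fin 2 → Fin 2) → ℝ :=
  fun i f => if f = (fun _ => i) then 1 else 0

lemma diagA_apply (x : Fin 2 → ℝ) (i : Fin 2) : tApply diagA x i = x i ^ 2 := by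
  unfold tApply diagA
  have key : ∀ f : Fin 2 → Fin 2,
      (if f = (fun _ => i) then (1:ℝ) else 0) * ∏ j, x (f j)
        = if f = (fun _ => i) then ∏ j, x (f j) else 0 := by
    intro f; by_cases h : f = (fun _ => i) <;> simp [h]
  simp_rw [key]
  rw [Finset.sum_ite_eq' Finset.univ (fun _ => i) (fun f => ∏ j, x (f j))]
  simp [Finset.prod_const, sq]

/-- There exists a tensor of (odd) order 3 and dimension 2 such
that TCP(q,A) has a unique solution for every q, yet A is not a P tensor. -/
theorem stmt_5 :
    ∃ A : Fin 2 → (Fin 2 → Fin 2) → ℝ,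
      (∀ q : Fin 2 → ℝ, ∃! x : Fin 2 → ℝ,
        (∀ i, 0 ≤ x i) ∧ (∀ i, 0 ≤ tApply A x i + q i) ∧
          ∑ i, x i * (tApply A x i + q i) = 0) ∧
      ¬ (∀ x : Fin 2 → ℝ, x ≠ 0 → ∃ i, x i * tApply A x i > 0) := by
  refine ⟨diagA, ?_, ?_⟩
  · intro q
    refine ⟨fun i => if q i < 0 then Real.sqrt (-q i) else 0, ?_, ?_⟩
    · refine ⟨fun i => ?_, fun i => ?_, ?_⟩
      · by_cases h : q i < 0 <;> simp [h, Real.sqrt_nonneg]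
      · rw [diagA_apply]
        by_cases h : q i < 0
        · simp only [h, if_pos]
          rw [Real.sq_sqrt (by linarith)]
          linarith
        · push_neg at h
          rw [if_neg (not_lt.mpr h)]
          simpa using h
      · apply Finset.sum_eq_zero
        intro i _
        rw [diagA_apply]
        by_cases h : q i < 0
        · simp only [h, if_pos]
          rw [Real.sq_sqrt (by linarith)]
          ring
        · simp [h]
    · rintro y ⟨hy0, hyf, hyc⟩
      funext i
      simp only [diagA_apply] at hyf hyc
      have hterm : ∀ j ∈ Finset.univ, y j * (y j ^ 2 + q j) = 0 := by
        rw [← Finset.sum_eq_zero_iff_of_nonneg]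
        · exact hyc
        · intro j _
          exact mul_nonneg (hy0 j) (hyf j)
      have hi := hterm i (Finset.mem_univ i)
      by_cases h : q i < 0
      · simp only [h, if_pos]
        have hpos : 0 < y i := by
          rcases lt_or_eq_of_le (hy0 i) with h' | h'
          · exact h'
          · exfalso; have := hyf i; rw [← h'] at this; simp at this; linarith
        have : y i ^ 2 + q i = 0 := by
          rcases mul_eq_zero.mp hi with h' | h'
          · linarith
          · exact h'
        have : y i ^ 2 = -q i := by linarith
        rw [← this, Real.sqrt_sq (hy0 i)]
      · push_neg at h
        simp only [not_lt.mpr h, if_neg, ite_eq_right_iff]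
        by_contra hne
        have hpos : 0 < y i := lt_of_le_of_ne (hy0 i) (by simpa [eq_comm, LE.le.not_gt h] using hne)
        have : 0 < y i * (y i ^ 2 + q i) :=
          mul_pos hpos (by nlinarith)
        linarith
  · intro hP
    obtain ⟨i, hi⟩ := hP (fun _ => -1) (by
      intro h; have := congrFun h 0; simp at this)
    rw [diagA_apply] at hi
    norm_num at hi
end

section
/- There does not exist a P tensor of odd order: if A ∈ T_{m,n} with m odd, then there exists a nonzero x ∈ ℝⁿ such that x_i (A x^{m-1})_i ≤ 0 for all i ∈ [n]. -/
/-- A multi-index containing any coordinate other than `i` kills the product. -/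
theorem tApply_single_self {n k : ℕ} (A : Fin n → (Fin k → Fin n) → ℝ) (i : Fin n) (c : ℝ) :
    tApply A (Pi.single i c) i = A i (fun _ => i) * c ^ k := by
  rw [tApply, Finset.sum_eq_single (fun _ => i)]
  · simp
  · intro f _ hf
    obtain ⟨j, hj⟩ : ∃ j, f j ≠ i := by
      by_contra! h
      exact hf (funext h)
    rw [Finset.prod_eq_zero (Finset.mem_univ j) (Pi.single_eq_of_ne hj _), mul_zero]
  · simp

theorem Odd.exists_ne_zero_pow_mul_nonpos {R : Type*} [Ring R] [LinearOrder R]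
    [IsStrictOrderedRing R] {m : ℕ} (hm : Odd m) (a : R) :
    ∃ c : R, c ≠ 0 ∧ c ^ m * a ≤ 0 := by
  rcases le_total 0 a with ha | ha
  · exact ⟨-1, by norm_num, by rw [hm.neg_one_pow, neg_one_mul]; exact neg_nonpos.mpr ha⟩
  · exact ⟨1, one_ne_zero, by simpa using ha⟩

/-- There is no P tensor of odd order: if m is odd then there
is a nonzero x with x_i (A x^{m-1})_i ≤ 0 for all i. -/
theorem stmt_6 {m n : ℕ} (hm : Odd m) (hn : 0 < n)
    (A : Fin n → (Fin (m - 1) → Fin n) → ℝ) :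
    ∃ x : Fin n → ℝ, x ≠ 0 ∧ ∀ i, x i * tApply A x i ≤ 0 := by
  let i₀ : Fin n := ⟨0, hn⟩
  obtain ⟨c, hc, hca⟩ := hm.exists_ne_zero_pow_mul_nonpos (A i₀ fun _ => i₀)
  refine ⟨Pi.single i₀ c, by simpa using hc, fun i => ?_⟩
  rcases eq_or_ne i i₀ with rfl | hi
  · calc (Pi.single i₀ c : Fin n → ℝ) i₀ * tApply A (Pi.single i₀ c) i₀
          = c ^ (m - 1 + 1) * A i₀ (fun _ => i₀) := by
            rw [Pi.single_eq_same, tApply_single_self, pow_succ]; ring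
      _ ≤ 0 := by rwa [Nat.sub_add_cancel hm.pos]
  · rw [Pi.single_eq_of_ne hi, zero_mul]
end

section
/- If A is a P tensor such that 0 is the unique solution of TCP(0,A), and if moreover TCP(q,A) has at least one solution for every q ∈ ℝⁿ, then for every q ∈ ℝⁿ the solution set of TCP(q,A) is nonempty and compact. -/
lemma tApply_continuous {n k : ℕ} (A : Fin n → (Fin k → Fin n) → ℝ) (i : Fin n) :
    Continuous fun x : Fin n → ℝ => tApply A x i := by
  unfold tApply
  exact continuous_finset_sum _ fun f _ =>
    continuous_const.mul (continuous_finset_prod _ fun j _ => continuous_apply (f j))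

lemma tApply_smul {n k : ℕ} (A : Fin n → (Fin k → Fin n) → ℝ) (c : ℝ)
    (x : Fin n → ℝ) (i : Fin n) : tApply A (c • x) i = c ^ k * tApply A x i := by
  unfold tApply
  rw [Finset.mul_sum]
  refine Finset.sum_congr rfl fun f _ => ?_
  simp only [Pi.smul_apply, smul_eq_mul, Finset.prod_mul_distrib, Finset.prod_const,
    Finset.card_univ, Fintype.card_fin]
  ring

lemma tApply_of_isEmpty {n k : ℕ} [IsEmpty (Fin k)] (A : Fin n → (Fin k → Fin n) → ℝ)
    (x y : Fin n → ℝ) (i : Fin n) : tApply A x i = tApply A y i := by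
  unfold tApply
  simp [Finset.univ_eq_empty (α := Fin k)]

/-- If A is a P tensor, 0 is the unique solution of TCP(0,A),
and TCP(q,A) is solvable for every q, then for every q the solution set of
TCP(q,A) is nonempty and compact. -/
theorem stmt_9 {m n : ℕ} (A : Fin n → (Fin (m - 1) → Fin n) → ℝ)
    (hP : ∀ x : Fin n → ℝ, x ≠ 0 → ∃ i, x i * tApply A x i > 0)
    (h0 : ∀ x : Fin n → ℝ,
      ((∀ i, 0 ≤ x i) ∧ (∀ i, 0 ≤ tApply A x i) ∧
        ∑ i, x i * tApply A x i = 0) ↔ x = 0)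
    (hex : ∀ q : Fin n → ℝ, ∃ x : Fin n → ℝ,
      (∀ i, 0 ≤ x i) ∧ (∀ i, 0 ≤ tApply A x i + q i) ∧
        ∑ i, x i * (tApply A x i + q i) = 0) :
    ∀ q : Fin n → ℝ,
      ({x : Fin n → ℝ | (∀ i, 0 ≤ x i) ∧ (∀ i, 0 ≤ tApply A x i + q i) ∧
          ∑ i, x i * (tApply A x i + q i) = 0}).Nonempty ∧
      IsCompact {x : Fin n → ℝ | (∀ i, 0 ≤ x i) ∧
        (∀ i, 0 ≤ tApply A x i + q i) ∧
          ∑ i, x i * (tApply A x i + q i) = 0} := by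
  intro q
  constructor
  · obtain ⟨x, hx⟩ := hex q
    exact ⟨x, hx⟩
  by_cases hn : n = 0
  · subst hn
    haveI : Subsingleton (Fin 0 → ℝ) := ⟨fun a b => funext fun i => i.elim0⟩
    exact (Set.subsingleton_of_subsingleton).finite.isCompact
  rcases Nat.eq_zero_or_pos (m - 1) with hk | hk
  · -- degenerate degree: hex is contradictory
    exfalso
    haveI : IsEmpty (Fin (m - 1)) := by rw [hk]; infer_instance
    obtain ⟨x, _, hx2, _⟩ := hex (fun i => -(tApply A 0 i) - 1)
    have i0 : Fin n := ⟨0, Nat.pos_of_ne_zero hn⟩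
    have := hx2 i0
    rw [tApply_of_isEmpty A x 0] at this
    linarith
  -- main case
  have hF : ∀ i, Continuous fun x : Fin n → ℝ => tApply A x i := tApply_continuous A
  have h1 : IsClosed {x : Fin n → ℝ | ∀ i, 0 ≤ x i} := by
    have : {x : Fin n → ℝ | ∀ i, 0 ≤ x i} = ⋂ i, {x | 0 ≤ x i} := by
      ext x; simp
    rw [this]
    exact isClosed_iInter fun i => isClosed_le continuous_const (continuous_apply i)
  have hcl : IsClosed {x : Fin n → ℝ | (∀ i, 0 ≤ x i) ∧ (∀ i, 0 ≤ tApply A x i + q i) ∧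
      ∑ i, x i * (tApply A x i + q i) = 0} := by
    have h2 : IsClosed {x : Fin n → ℝ | ∀ i, 0 ≤ tApply A x i + q i} := by
      have : {x : Fin n → ℝ | ∀ i, 0 ≤ tApply A x i + q i} =
          ⋂ i, {x | 0 ≤ tApply A x i + q i} := by ext x; simp
      rw [this]
      exact isClosed_iInter fun i =>
        isClosed_le continuous_const ((hF i).add continuous_const)
    have h3 : IsClosed {x : Fin n → ℝ | ∑ i, x i * (tApply A x i + q i) = 0} := by
      refine isClosed_eq ?_ continuous_const
      exact continuous_finset_sum _ fun i _ =>
        (continuous_apply i).mul ((hF i).add continuous_const)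
    exact h1.inter (h2.inter h3)
  -- the violation function
  set g : (Fin n → ℝ) → ℝ := fun y =>
    (∑ i, y i * tApply A y i) + ∑ i, 2 * max (-(tApply A y i)) 0 with hg
  have hgcont : Continuous g := by
    apply Continuous.add
    · exact continuous_finset_sum _ fun i _ => (continuous_apply i).mul (hF i)
    · exact continuous_finset_sum _ fun i _ =>
        continuous_const.mul (((hF i).neg).max continuous_const)
  set K : Set (Fin n → ℝ) := {y | ‖y‖ = 1 ∧ ∀ i, 0 ≤ y i} with hK
  have hKc : IsCompact K := by
    have : K = Metric.sphere 0 1 ∩ {y | ∀ i, 0 ≤ y i} := by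
      ext y
      simp [hK, Metric.mem_sphere, dist_zero_right]
    rw [this]
    exact (isCompact_sphere 0 1).inter_right h1
  have hgsum : ∀ y : Fin n → ℝ,
      g y = ∑ i, (y i * tApply A y i + 2 * max (-(tApply A y i)) 0) := by
    intro y
    simp [hg, Finset.sum_add_distrib]
  have hgpos : ∀ y ∈ K, 0 < g y := by
    rintro y ⟨hy1, hy2⟩
    have hyne : y ≠ 0 := by
      intro h; rw [h] at hy1; simp at hy1
    have hyle : ∀ i, y i ≤ 1 := by
      intro i
      have h := norm_le_pi_norm y i
      rw [hy1, Real.norm_eq_abs] at h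
      exact (le_abs_self _).trans h
    by_cases hA : ∀ i, 0 ≤ tApply A y i
    · have hsum : ∑ i, y i * tApply A y i ≠ 0 := by
        intro h
        exact hyne ((h0 y).mp ⟨hy2, hA, h⟩)
      have hsum' : 0 ≤ ∑ i, y i * tApply A y i :=
        Finset.sum_nonneg fun i _ => mul_nonneg (hy2 i) (hA i)
      have hpos : 0 < ∑ i, y i * tApply A y i := lt_of_le_of_ne hsum' (Ne.symm hsum)
      have h2' : 0 ≤ ∑ i, 2 * max (-(tApply A y i)) 0 :=
        Finset.sum_nonneg fun i _ => mul_nonneg (by norm_num) (le_max_right _ _)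
      simp only [hg]; linarith
    · push_neg at hA
      obtain ⟨i0, hi0⟩ := hA
      have key : ∀ i, 0 ≤ y i * tApply A y i + 2 * max (-(tApply A y i)) 0 := by
        intro i
        rcases le_or_gt 0 (tApply A y i) with h | h
        · have hm : max (-(tApply A y i)) 0 = 0 := max_eq_right (by linarith)
          rw [hm]
          have := mul_nonneg (hy2 i) h
          linarith
        · have hm : max (-(tApply A y i)) 0 = -(tApply A y i) := max_eq_left (by linarith)
          rw [hm]
          nlinarith [hyle i, hy2 i]
      have keyi0 : 0 < y i0 * tApply A y i0 + 2 * max (-(tApply A y i0)) 0 := by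
        have hm : max (-(tApply A y i0)) 0 = -(tApply A y i0) := max_eq_left (by linarith)
        rw [hm]
        nlinarith [hyle i0, hy2 i0]
      rw [hgsum y]
      exact Finset.sum_pos' (fun i _ => key i) ⟨i0, Finset.mem_univ i0, keyi0⟩
  have hε : ∃ ε > 0, ∀ y ∈ K, ε ≤ g y := by
    rcases K.eq_empty_or_nonempty with h | h
    · exact ⟨1, one_pos, by simp [h]⟩
    · obtain ⟨y0, hy0K, hy0⟩ := hKc.exists_isMinOn h hgcont.continuousOn
      exact ⟨g y0, hgpos y0 hy0K, fun y hy => hy0 hy⟩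
  obtain ⟨ε, hε0, hεK⟩ := hε
  set C : ℝ := 3 * ∑ i, |q i| with hCdef
  have hq0 : 0 ≤ ∑ i, |q i| := Finset.sum_nonneg fun i _ => abs_nonneg _
  rw [Metric.isCompact_iff_isClosed_bounded]
  refine ⟨hcl, isBounded_iff_forall_norm_le.mpr ⟨max 1 (C / ε), ?_⟩⟩
  rintro x ⟨hx1, hx2, hx3⟩
  rcases eq_or_ne x 0 with rfl | hx0
  · simp
  set t : ℝ := ‖x‖ with ht
  have htpos : 0 < t := norm_pos_iff.mpr hx0
  set y : Fin n → ℝ := t⁻¹ • x with hy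
  have hyn : ‖y‖ = 1 := by
    rw [hy, norm_smul, Real.norm_eq_abs, abs_of_pos (inv_pos.mpr htpos), ← ht]
    field_simp
  have hyK : y ∈ K := ⟨hyn, fun i => mul_nonneg (inv_nonneg.mpr htpos.le) (hx1 i)⟩
  set p : ℝ := t⁻¹ ^ (m - 1) with hp
  have hppos : 0 < p := pow_pos (inv_pos.mpr htpos) _
  have hTy : ∀ i, tApply A y i = p * tApply A x i := fun i => tApply_smul A t⁻¹ x i
  have hxle : ∀ i, x i ≤ t := by
    intro i
    have h := norm_le_pi_norm x i
    rw [Real.norm_eq_abs] at h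
    exact (le_abs_self _).trans h
  -- bound the first part of g y
  have hsum0 : ∑ i, x i * tApply A x i = -∑ i, x i * q i := by
    have : ∑ i, x i * (tApply A x i + q i)
        = ∑ i, x i * tApply A x i + ∑ i, x i * q i := by
      rw [← Finset.sum_add_distrib]
      exact Finset.sum_congr rfl fun i _ => by ring
    rw [this] at hx3
    linarith
  have hb1 : ∑ i, y i * tApply A y i ≤ p * ∑ i, |q i| := by
    have heq : ∑ i, y i * tApply A y i = t⁻¹ * p * ∑ i, x i * tApply A x i := by
      rw [Finset.mul_sum]
      refine Finset.sum_congr rfl fun i _ => ?_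
      rw [hTy i, hy]
      simp only [Pi.smul_apply, smul_eq_mul]
      ring
    rw [heq, hsum0]
    have hb : -∑ i, x i * q i ≤ t * ∑ i, |q i| := by
      rw [← Finset.sum_neg_distrib, Finset.mul_sum]
      refine Finset.sum_le_sum fun i _ => ?_
      have h1' : -(x i * q i) = x i * (-q i) := by ring
      rw [h1']
      have := mul_le_mul_of_nonneg_left ((neg_le_abs (q i))) (hx1 i)
      calc x i * (-q i) ≤ x i * |q i| := this
        _ ≤ t * |q i| := mul_le_mul_of_nonneg_right (hxle i) (abs_nonneg _)
    calc t⁻¹ * p * (-∑ i, x i * q i) ≤ t⁻¹ * p * (t * ∑ i, |q i|) := by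
          apply mul_le_mul_of_nonneg_left hb
          positivity
      _ = p * ∑ i, |q i| := by field_simp
  -- bound the second part of g y
  have hb2 : ∑ i, 2 * max (-(tApply A y i)) 0 ≤ 2 * p * ∑ i, |q i| := by
    rw [Finset.mul_sum]
    refine Finset.sum_le_sum fun i _ => ?_
    have hqi : -(tApply A x i) ≤ |q i| := by
      have := hx2 i
      have := le_abs_self (q i)
      linarith
    have hmax : max (-(tApply A y i)) 0 ≤ p * |q i| := by
      apply max_le
      · rw [hTy i]
        calc -(p * tApply A x i) = p * -(tApply A x i) := by ring
          _ ≤ p * |q i| := mul_le_mul_of_nonneg_left hqi hppos.le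
      · positivity
    calc 2 * max (-(tApply A y i)) 0 ≤ 2 * (p * |q i|) := by linarith
      _ = 2 * p * |q i| := by ring
  have hgle : g y ≤ p * C := by
    have := hεK y hyK
    simp only [hg]
    rw [hCdef]
    calc (∑ i, y i * tApply A y i) + ∑ i, 2 * max (-(tApply A y i)) 0
        ≤ p * ∑ i, |q i| + 2 * p * ∑ i, |q i| := add_le_add hb1 hb2
      _ = p * (3 * ∑ i, |q i|) := by ring
  have hεle : ε ≤ p * C := le_trans (hεK y hyK) hgle
  -- hence t^(m-1) ≤ C / ε
  have htk : t ^ (m - 1) ≤ C / ε := by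
    have hpinv : p = (t ^ (m - 1))⁻¹ := by
      rw [hp, inv_pow]
    have htk0 : 0 < t ^ (m - 1) := pow_pos htpos _
    rw [hpinv] at hεle
    rw [le_div_iff₀ hε0]
    calc t ^ (m - 1) * ε ≤ t ^ (m - 1) * ((t ^ (m - 1))⁻¹ * C) := by
          apply mul_le_mul_of_nonneg_left hεle htk0.le
      _ = C := by field_simp
  rcases le_or_gt t 1 with h | h
  · exact le_trans h (le_max_left _ _)
  · refine le_trans ?_ (le_max_right _ _)
    calc t ≤ t ^ (m - 1) := le_self_pow₀ h.le hk.ne'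
      _ ≤ C / ε := htk
end

section
/- Let F : ℝⁿ₊ → ℝⁿ be a P-function, i.e., for all distinct x, y in ℝⁿ₊ there exists i with (x_i − y_i)(F_i(x) − F_i(y)) > 0. Then the complementarity problem CP(F) — find x ≥ 0 with F(x) ≥ 0 and xᵀF(x) = 0 — has at most one solution. -/
/-!
At coordinate `i`, complementarity gives `x i * F x i = 0 = y i * F y i`, so
`(x i - y i) * (F x i - F y i) = -(x i * F y i + y i * F x i) ≤ 0` by nonnegativity.
Two distinct solutions would therefore contradict the P-property at every coordinate.
-/

open Finset

lemma sub_mul_sub_nonpos_of_mul_eq_zero {a b c d : ℝ} (ha : 0 ≤ a) (hb : 0 ≤ b) (hc : 0 ≤ c)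
    (hd : 0 ≤ d) (hac : a * c = 0) (hbd : b * d = 0) : (a - b) * (c - d) ≤ 0 := by
  nlinarith [mul_nonneg ha hd, mul_nonneg hb hc]

section Complementarity

variable {ι : Type*} [Fintype ι]

def IsComplementaritySolution (F : (ι → ℝ) → ι → ℝ) (x : ι → ℝ) : Prop :=
  (∀ i, 0 ≤ x i) ∧ (∀ i, 0 ≤ F x i) ∧ ∑ i, x i * F x i = 0

namespace IsComplementaritySolution

variable {F : (ι → ℝ) → ι → ℝ} {x y : ι → ℝ}

lemma mul_eq_zero (hx : IsComplementaritySolution F x) (i : ι) : x i * F x i = 0 :=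
  (sum_eq_zero_iff_of_nonneg fun j _ => mul_nonneg (hx.1 j) (hx.2.1 j)).mp hx.2.2 i (mem_univ i)

lemma sub_mul_sub_nonpos (hx : IsComplementaritySolution F x) (hy : IsComplementaritySolution F y)
    (i : ι) : (x i - y i) * (F x i - F y i) ≤ 0 :=
  sub_mul_sub_nonpos_of_mul_eq_zero (hx.1 i) (hy.1 i) (hx.2.1 i) (hy.2.1 i)
    (hx.mul_eq_zero i) (hy.mul_eq_zero i)

end IsComplementaritySolution

end Complementarity

/-- If F is a P-function on ℝⁿ₊, then the complementarity
problem CP(F) has at most one solution. -/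
theorem stmt_12 {n : ℕ} (F : (Fin n → ℝ) → (Fin n → ℝ))
    (hP : ∀ x y : Fin n → ℝ, (∀ i, 0 ≤ x i) → (∀ i, 0 ≤ y i) → x ≠ y →
      ∃ i, (x i - y i) * (F x i - F y i) > 0) :
    ∀ x y : Fin n → ℝ,
      ((∀ i, 0 ≤ x i) ∧ (∀ i, 0 ≤ F x i) ∧ ∑ i, x i * F x i = 0) →
      ((∀ i, 0 ≤ y i) ∧ (∀ i, 0 ≤ F y i) ∧ ∑ i, y i * F y i = 0) →
      x = y := by
  intro x y hx hy
  by_contra hne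
  obtain ⟨i, hi⟩ := hP x y hx.1 hy.1 hne
  exact (IsComplementaritySolution.sub_mul_sub_nonpos (F := F) hx hy i).not_gt hi
end

section
/- The 4th order 2-dimensional tensor A with a_{1111}=1, a_{1222}=−1, a_{1122}=1, a_{2222}=1, a_{2111}=−1, a_{2211}=1 and all other entries zero, giving (A x^3)_1 = x_1³ − x_2³ + x_1x_2² and (A x^3)_2 = x_2³ − x_1³ + x_2x_1², is a P tensor: for every nonzero x ∈ ℝ² there is i ∈ {1,2} with x_i(A x^3)_i > 0. -/
/-! Summing the two products gives
`x₀ (A x³)₀ + x₁ (A x³)₁ = (x₀² + x₁²)(x₀² - x₀x₁ + x₁²)`,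
and both factors are positive for `x ≠ 0`, so at least one of the two products is positive. -/

section

variable {R : Type*} [CommRing R] [LinearOrder R] [IsStrictOrderedRing R] {a b : R}

theorem sq_add_sq_pos_of_ne_zero_or_ne_zero (h : a ≠ 0 ∨ b ≠ 0) : 0 < a ^ 2 + b ^ 2 := by
  rcases h with h | h <;> positivity

theorem sq_sub_mul_add_sq_pos_of_ne_zero_or_ne_zero (h : a ≠ 0 ∨ b ≠ 0) :
    0 < a ^ 2 - a * b + b ^ 2 := by
  have hpos : 0 < (2 * a - b) ^ 2 + 3 * b ^ 2 := by
    rcases eq_or_ne b 0 with rfl | hb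
    · have ha : a ≠ 0 := by simpa using h
      rw [sub_zero]
      positivity
    · positivity
  linarith [show 4 * (a ^ 2 - a * b + b ^ 2) = (2 * a - b) ^ 2 + 3 * b ^ 2 by ring]

end

/-- The 4th order 2-dimensional tensor with
`(A x^3)_1 = x_1³ - x_2³ + x_1x_2²`, `(A x^3)_2 = x_2³ - x_1³ + x_2x_1²`
is a P tensor. -/
theorem stmt_16 :
    ∀ x : Fin 2 → ℝ, x ≠ 0 →
      ∃ i : Fin 2,
        x i * (![x 0 ^ 3 - x 1 ^ 3 + x 0 * x 1 ^ 2,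
                 x 1 ^ 3 - x 0 ^ 3 + x 1 * x 0 ^ 2] i) > 0 := by
  intro x hx
  have hx' : x 0 ≠ 0 ∨ x 1 ≠ 0 := by
    contrapose! hx
    exact funext (Fin.forall_fin_two.2 hx)
  have hsum : 0 < ∑ i, x i * (![x 0 ^ 3 - x 1 ^ 3 + x 0 * x 1 ^ 2,
      x 1 ^ 3 - x 0 ^ 3 + x 1 * x 0 ^ 2] i) := by
    simp only [Fin.sum_univ_two, Matrix.cons_val_zero, Matrix.cons_val_one]
    calc (0 : ℝ) < (x 0 ^ 2 + x 1 ^ 2) * (x 0 ^ 2 - x 0 * x 1 + x 1 ^ 2) :=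
          mul_pos (sq_add_sq_pos_of_ne_zero_or_ne_zero hx')
            (sq_sub_mul_add_sq_pos_of_ne_zero_or_ne_zero hx')
      _ = _ := by ring
  by_contra! hnonpos
  exact hsum.not_ge (Finset.sum_nonpos fun i _ => hnonpos i)
end

section
/- The map F(x) = (x_1³ − x_2³ + x_1x_2², x_2³ − x_1³ + x_2x_1²) on ℝ² is not a P-function: for x = (2.1, −1.9) and y = (2, −2), both (x_1−y_1)(F_1(x)−F_1(y)) < 0 and (x_2−y_2)(F_2(x)−F_2(y)) < 0. Hence the corresponding tensor is a P tensor but not a strong P tensor, so the strong P tensors form a proper subset of the P tensors. -/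
def IsPFunction {ι : Type*} (F : (ι → ℝ) → ι → ℝ) : Prop :=
  ∀ u v : ι → ℝ, u ≠ v → ∃ i, (u i - v i) * (F u i - F v i) > 0

theorem not_isPFunction_of_forall_nonpos {ι : Type*} {F : (ι → ℝ) → ι → ℝ} {x y : ι → ℝ}
    (hxy : x ≠ y) (h : ∀ i, (x i - y i) * (F x i - F y i) ≤ 0) : ¬ IsPFunction F :=
  fun hF => by
    obtain ⟨i, hi⟩ := hF x y hxy
    exact (h i).not_gt hi

/-- The map
`F(x) = (x_1³ - x_2³ + x_1x_2², x_2³ - x_1³ + x_2x_1²)` is not a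
P-function: for `x = (2.1, -1.9)` and `y = (2, -2)` both products
`(x_i - y_i)(F_i(x) - F_i(y))` are negative; hence `F` is not a
P-function (so the underlying P tensor is not a strong P tensor). -/
theorem stmt_17 :
    let F : (Fin 2 → ℝ) → (Fin 2 → ℝ) :=
      fun x => ![x 0 ^ 3 - x 1 ^ 3 + x 0 * x 1 ^ 2,
                 x 1 ^ 3 - x 0 ^ 3 + x 1 * x 0 ^ 2]
    let x : Fin 2 → ℝ := ![2.1, -1.9]
    let y : Fin 2 → ℝ := ![2, -2]
    ((x 0 - y 0) * (F x 0 - F y 0) < 0) ∧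
    ((x 1 - y 1) * (F x 1 - F y 1) < 0) ∧
    ¬ (∀ u v : Fin 2 → ℝ, u ≠ v →
        ∃ i, (u i - v i) * (F u i - F v i) > 0) := by
  intro F x y
  have h0 : (x 0 - y 0) * (F x 0 - F y 0) < 0 := by norm_num [F, x, y]
  have h1 : (x 1 - y 1) * (F x 1 - F y 1) < 0 := by norm_num [F, x, y]
  have hxy : x ≠ y := Function.ne_iff.mpr ⟨0, by norm_num [x, y]⟩
  refine ⟨h0, h1, not_isPFunction_of_forall_nonpos hxy ?_⟩
  intro i
  fin_cases i
  exacts [h0.le, h1.le]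
end

section
/- Every principal sub-tensor of a strong P tensor is a strong P tensor: if A ∈ T_{m,n} is a strong P tensor and J ⊆ [n] with |J| = r, then the principal sub-tensor A_r^J (entries a_{i_1⋯i_m} with all indices in J) is a strong P tensor in T_{m,r}. -/
/-! If `x̄` extends `x ∈ ℝ^J` by zeros, then `(A x̄^{m-1})_i = (A_J x^{m-1})_i` for `i ∈ J`,
because every monomial of `A x̄^{m-1}` involving an index outside `J` vanishes. Hence a pair
`x ≠ y` witnessing failure of the strong P property for `A_J` would extend to such a pair for
`A`: the coordinates outside `J` contribute `0 · (…) = 0`. -/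

def IsStrongP {n k : ℕ} (A : Fin n → (Fin k → Fin n) → ℝ) : Prop :=
  ∀ x y : Fin n → ℝ, x ≠ y → ∃ i, (x i - y i) * (tApply A x i - tApply A y i) > 0

def principalSubtensor {n r k : ℕ} (A : Fin n → (Fin k → Fin n) → ℝ) (ι : Fin r → Fin n) :
    Fin r → (Fin k → Fin r) → ℝ :=
  fun i f => A (ι i) (ι ∘ f)

lemma tApply_extend_zero {n r k : ℕ} (A : Fin n → (Fin k → Fin n) → ℝ)
    {ι : Fin r → Fin n} (hι : Function.Injective ι) (x : Fin r → ℝ) (i : Fin r) :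
    tApply A (Function.extend ι x 0) (ι i) = tApply (principalSubtensor A ι) x i := by
  refine (Fintype.sum_of_injective (ι ∘ ·) hι.comp_left _ _ ?_ fun g => ?_).symm
  · intro f hf
    obtain ⟨j, hj⟩ : ∃ j, f j ∉ Set.range ι := by
      by_contra! h
      choose g hg using h
      exact hf ⟨g, funext hg⟩
    rw [Finset.prod_eq_zero (Finset.mem_univ j) (Function.extend_apply' _ _ _ hj), mul_zero]
  · simp only [principalSubtensor, Function.comp_apply, hι.extend_apply]

theorem IsStrongP.principalSubtensor {n r k : ℕ} {A : Fin n → (Fin k → Fin n) → ℝ}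
    (hA : IsStrongP A) {ι : Fin r → Fin n} (hι : Function.Injective ι) :
    IsStrongP (principalSubtensor A ι) := by
  intro x y hxy
  obtain ⟨i, hi⟩ := hA _ _ ((Function.extend_injective hι 0).ne hxy)
  obtain ⟨k, rfl⟩ : i ∈ Set.range ι := by
    by_contra hi'
    simp [Function.extend_apply' _ _ _ hi'] at hi
  refine ⟨k, ?_⟩
  rwa [hι.extend_apply, hι.extend_apply, tApply_extend_zero A hι, tApply_extend_zero A hι] at hi

/-- Every principal sub-tensor of a strong P tensor is a
strong P tensor. The index set J ⊆ [n] with |J| = r is encoded as an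
injection ι : Fin r → Fin n; the principal sub-tensor has entries
(fun k f => A (ι k) (ι ∘ f)). -/
theorem stmt_19 {m n r : ℕ} (A : Fin n → (Fin (m - 1) → Fin n) → ℝ)
    (ι : Fin r → Fin n) (hι : Function.Injective ι)
    (hsP : ∀ x y : Fin n → ℝ, x ≠ y →
      ∃ i, (x i - y i) * (tApply A x i - tApply A y i) > 0) :
    ∀ x y : Fin r → ℝ, x ≠ y →
      ∃ k, (x k - y k) *
        (tApply (fun k f => A (ι k) (ι ∘ f)) x k -
         tApply (fun k f => A (ι k) (ι ∘ f)) y k) > 0 :=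
  IsStrongP.principalSubtensor hsP hι
end
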